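/- arXiv:2308.07760 — 3 statements merged into one kernel-verified Lean document; each statement's English description precedes it below -/
import Mathlib

section
/- Let d, L, D ≥ 1 be integers, let γ ∈ (0,1), λ > 0 and U, S, k, c, B_L > 0 with c ≤ k. Let 𝒜 be a finite nonempty set of arms. For each 1 ≤ l ≤ L let x_l ∈ ℝ^d with ‖x_l‖₂ ≤ U, let a_l, a*_l ∈ 𝒜 (the selected and the optimal arm at interaction l), for each arm a let θ*_{l,a} ∈ ℝ^d (true parameter) and θ_{l,a} ∈ ℝ^d (estimated parameter), let V_{l,a} ∈ ℝ^{d×d} be positive definite, and let 0 ≤ β_1 ≤ β_2 ≤ … ≤ β_L be reals. Write n_{l,a} := ‖x_l‖_{V_{l,a}^{-1}}, Δ_s := max_{a∈𝒜} ‖θ*_{s+1,a} − θ*_{s,a}‖₂ for 1 ≤ s ≤ L−1 and Δ_s := 0 for s outside [1, L−1], and assume Σ_{s=1}^{L−1} Δ_s ≤ B_L. Assume: (i) for every 1 ≤ l ≤ L and every a ∈ {a_l, a*_l}, |⟨x_l, θ*_{l,a}⟩ − ⟨x_l, θ_{l,a}⟩| ≤ (2k/c)·β_l·n_{l,a} +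 (2kU/c)·√(1 + U²/(λ(1−γ)))·( (2kSU²/λ)·γ^D/(1−γ) + k·√(d/(λ(1−γ)))·Σ_{s=l−D}^{l−1} Δ_s ); (ii) for every 1 ≤ l ≤ L, ⟨x_l, θ_{l,a*_l}⟩ − ⟨x_l, θ_{l,a_l}⟩ ≤ (2k/c)·β_l·( n_{l,a*_l} − n_{l,a_l} ); (iii) Σ_{l=1}^{L} n_{l,a*_l}² ≤ 2·max(1, U²/λ)·( dL·log(1/γ) + d·log(1 + U²(1−γ^L)/(λd(1−γ))) ). Then the dynamic regret R_L := Σ_{l=1}^{L} ( ⟨x_l, θ*_{l,a*_l}⟩ − ⟨x_l, θ*_{l,a_l}⟩ ) satisfies R_L ≤ √(32·max(1, U²/λ))·(k/c)·β_L·√(dL)·√( L·log(1/γ) + log(1 + U²(1−γ^L)/(λd(1−γ))) ) + (8k²SU³γ^D/(cλ(1−γ)))·L + (8k²SU⁴γ^D/(cλ^{3/2}(1−γ)^{3/2}))·L + (4k²UD/(c√λ))·√(d/(1−γ))·B_L + (4k²U²D/(cλ))·(√d/(1−γ))·B_L. -/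
open Matrix Finset
open scoped RealInnerProductSpace

set_option maxHeartbeats 1600000 in
/-- **Theorem 1 (DESS regret bound)**, stated deterministically conditional on the
high-probability events: (i) the prediction-error bound of Lemma 1, (ii) the optimism
inequality from UCB arm selection, and (iii) the discounted elliptical-potential bound of
Lemma 2. -/
theorem dess_regret_bound
    (d L D : ℕ) (hd : 1 ≤ d) (hL : 1 ≤ L) (hD : 1 ≤ D)
    (γ lam U S k c BL : ℝ)
    (hγ0 : 0 < γ) (hγ1 : γ < 1) (hlam : 0 < lam) (hU : 0 < U) (hS : 0 < S)
    (hc : 0 < c) (hk : 0 < k) (hck : c ≤ k) (hBL : 0 < BL)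
    (A : Type*) [Fintype A] [Nonempty A]
    -- context vectors
    (x : ℕ → EuclideanSpace ℝ (Fin d))
    (hx : ∀ l ∈ Finset.Icc 1 L, ‖x l‖ ≤ U)
    -- selected and optimal arms
    (asel aopt : ℕ → A)
    -- true and estimated parameters
    (θstar θ : ℕ → A → EuclideanSpace ℝ (Fin d))
    -- design matrices, positive definite
    (V : ℕ → A → Matrix (Fin d) (Fin d) ℝ)
    (hV : ∀ l ∈ Finset.Icc 1 L, ∀ a : A, (V l a).PosDef)
    -- nondecreasing nonnegative confidence coefficients
    (β : ℕ → ℝ) (hβ1 : 0 ≤ β 1)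
    (hβmono : ∀ l m : ℕ, 1 ≤ l → l ≤ m → m ≤ L → β l ≤ β m)
    -- n_{l,a} := ‖x_l‖_{V_{l,a}⁻¹}
    (n : ℕ → A → ℝ)
    (hn : ∀ l a, n l a = Real.sqrt (x l ⬝ᵥ ((V l a)⁻¹ *ᵥ x l)))
    -- per-step parameter variation Δ, supported on [1, L-1]
    (Δ : ℤ → ℝ)
    (hΔin : ∀ s : ℕ, 1 ≤ s → s ≤ L - 1 →
      Δ s = Finset.univ.sup' Finset.univ_nonempty
        (fun a : A => ‖θstar (s + 1) a - θstar s a‖))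
    (hΔout : ∀ s : ℤ, s < 1 ∨ (L : ℤ) - 1 < s → Δ s = 0)
    -- variation budget
    (hbudget : ∑ s ∈ Finset.Icc (1 : ℤ) ((L : ℤ) - 1), Δ s ≤ BL)
    -- (i) prediction-error bound (Lemma 1) for the selected and the optimal arm
    (hpred : ∀ l ∈ Finset.Icc 1 L, ∀ a : A, (a = asel l ∨ a = aopt l) →
      |⟪x l, θstar l a⟫ - ⟪x l, θ l a⟫| ≤
        (2 * k / c) * β l * n l a +
        (2 * k * U / c) * Real.sqrt (1 + U ^ 2 / (lam * (1 - γ))) *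
          ((2 * k * S * U ^ 2 / lam) * γ ^ D / (1 - γ) +
            k * Real.sqrt (d / (lam * (1 - γ))) *
              ∑ s ∈ Finset.Icc ((l : ℤ) - D) ((l : ℤ) - 1), Δ s))
    -- (ii) optimism inequality from the UCB selection rule
    (hucb : ∀ l ∈ Finset.Icc 1 L,
      ⟪x l, θ l (aopt l)⟫ - ⟪x l, θ l (asel l)⟫ ≤
        (2 * k / c) * β l * (n l (aopt l) - n l (asel l)))
    -- (iii) discounted elliptical-potential bound (Lemma 2)
    (hpot : ∑ l ∈ Finset.Icc 1 L, (n l (aopt l)) ^ 2 ≤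
      2 * max 1 (U ^ 2 / lam) *
        (d * L * Real.log (1 / γ) +
          d * Real.log (1 + U ^ 2 * (1 - γ ^ L) / (lam * d * (1 - γ))))) :
    ∑ l ∈ Finset.Icc 1 L, (⟪x l, θstar l (aopt l)⟫ - ⟪x l, θstar l (asel l)⟫) ≤
      Real.sqrt (32 * max 1 (U ^ 2 / lam)) * (k / c) * β L * Real.sqrt (d * L) *
        Real.sqrt (L * Real.log (1 / γ) +
          Real.log (1 + U ^ 2 * (1 - γ ^ L) / (lam * d * (1 - γ)))) +
      (8 * k ^ 2 * S * U ^ 3 * γ ^ D / (c * lam * (1 - γ))) * L +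
      (8 * k ^ 2 * S * U ^ 4 * γ ^ D / (c * lam ^ ((3 : ℝ) / 2) * (1 - γ) ^ ((3 : ℝ) / 2))) * L +
      (4 * k ^ 2 * U * D / (c * Real.sqrt lam)) * Real.sqrt (d / (1 - γ)) * BL +
      (4 * k ^ 2 * U ^ 2 * D / (c * lam)) * (Real.sqrt d / (1 - γ)) * BL := by

  have hγ' : (0:ℝ) < 1 - γ := by linarith
  have hd0 : (0:ℝ) < (d:ℝ) := by exact_mod_cast Nat.lt_of_lt_of_le Nat.zero_lt_one hd
  have hL0 : (0:ℝ) < (L:ℝ) := by exact_mod_cast Nat.lt_of_lt_of_le Nat.zero_lt_one hL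
  have hn0 : ∀ l a, 0 ≤ n l a := fun l a => by rw [hn l a]; exact Real.sqrt_nonneg _
  have hβL : 0 ≤ β L := le_trans hβ1 (hβmono 1 L le_rfl hL le_rfl)
  -- Δ is nonnegative
  have hΔ0 : ∀ s : ℤ, 0 ≤ Δ s := by
    intro s
    rcases lt_or_ge s 1 with h1 | h1
    · rw [hΔout s (Or.inl h1)]
    rcases lt_or_ge ((L:ℤ) - 1) s with h2 | h2
    · rw [hΔout s (Or.inr h2)]
    lift s to ℕ using by linarith
    have e := hΔin s (by exact_mod_cast h1) (by omega)
    rw [e]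
    exact le_trans (norm_nonneg _)
      (Finset.le_sup' (fun a : A => ‖θstar (s + 1) a - θstar s a‖) (Finset.mem_univ (Classical.arbitrary A)))
  set M := max 1 (U ^ 2 / lam) with hMdef
  have hM0 : (0:ℝ) ≤ M := le_trans zero_le_one (le_max_left _ _)
  set lg1 := Real.log (1 / γ) with hlg1def
  set lg2 := Real.log (1 + U ^ 2 * (1 - γ ^ L) / (lam * d * (1 - γ))) with hlg2def
  set Ac := (2 * k * U / c) * Real.sqrt (1 + U ^ 2 / (lam * (1 - γ))) with hAcdef
  set Bc := (2 * k * S * U ^ 2 / lam) * γ ^ D / (1 - γ) with hBcdef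
  set Ec := k * Real.sqrt ((d:ℝ) / (lam * (1 - γ))) with hEcdef
  have hAc0 : 0 ≤ Ac := by rw [hAcdef]; positivity
  have hEc0 : 0 ≤ Ec := by rw [hEcdef]; positivity
  have hBc0 : 0 ≤ Bc := by
    rw [hBcdef]
    exact div_nonneg (mul_nonneg (by positivity) (pow_nonneg hγ0.le D)) hγ'.le
  -- per-step regret bound
  have hstep : ∀ l ∈ Finset.Icc 1 L,
      ⟪x l, θstar l (aopt l)⟫ - ⟪x l, θstar l (asel l)⟫ ≤
        4 * (k / c) * β l * n l (aopt l) +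
          2 * (Ac * (Bc + Ec * ∑ s ∈ Finset.Icc ((l : ℤ) - D) ((l : ℤ) - 1), Δ s)) := by
    intro l hl
    have h1 := (abs_le.mp (hpred l hl (aopt l) (Or.inr rfl))).2
    have h2 := (abs_le.mp (hpred l hl (asel l) (Or.inl rfl))).1
    have h3 := hucb l hl
    rw [mul_sub] at h3
    have hid : 4 * (k / c) * β l * n l (aopt l)
        = 2 * k / c * β l * n l (aopt l) + 2 * k / c * β l * n l (aopt l) := by ring
    linarith [h1, h2, h3, hid]
  -- sum of per-step bounds
  have hsum : ∑ l ∈ Finset.Icc 1 L, (⟪x l, θstar l (aopt l)⟫ - ⟪x l, θstar l (asel l)⟫) ≤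
      ∑ l ∈ Finset.Icc 1 L, (4 * (k / c) * β l * n l (aopt l)) +
      ∑ l ∈ Finset.Icc 1 L,
        (2 * (Ac * (Bc + Ec * ∑ s ∈ Finset.Icc ((l : ℤ) - D) ((l : ℤ) - 1), Δ s))) := by
    rw [← Finset.sum_add_distrib]
    exact Finset.sum_le_sum hstep
  -- head term via monotonicity of β and Cauchy–Schwarz
  have hA : ∑ l ∈ Finset.Icc 1 L, (4 * (k / c) * β l * n l (aopt l)) ≤
      4 * (k / c) * β L * ∑ l ∈ Finset.Icc 1 L, n l (aopt l) := by
    rw [Finset.mul_sum]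
    refine Finset.sum_le_sum fun l hl => ?_
    have hmem := Finset.mem_Icc.mp hl
    exact mul_le_mul_of_nonneg_right
      (mul_le_mul_of_nonneg_left (hβmono l L hmem.1 hmem.2 le_rfl) (by positivity))
      (hn0 l (aopt l))
  have hNsum0 : 0 ≤ ∑ l ∈ Finset.Icc 1 L, n l (aopt l) :=
    Finset.sum_nonneg fun l _ => hn0 _ _
  have hcs : ∑ l ∈ Finset.Icc 1 L, n l (aopt l) ≤
      Real.sqrt (L:ℝ) * Real.sqrt (∑ l ∈ Finset.Icc 1 L, (n l (aopt l)) ^ 2) := by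
    have h := Finset.sum_mul_sq_le_sq_mul_sq (Finset.Icc 1 L) (fun _ => (1:ℝ))
      (fun l => n l (aopt l))
    simp only [one_mul, one_pow, Finset.sum_const, Nat.card_Icc, nsmul_eq_mul, smul_eq_mul, mul_one,
      Nat.add_sub_cancel] at h
    calc ∑ l ∈ Finset.Icc 1 L, n l (aopt l)
        = Real.sqrt ((∑ l ∈ Finset.Icc 1 L, n l (aopt l)) ^ 2) := (Real.sqrt_sq hNsum0).symm
      _ ≤ Real.sqrt ((L:ℝ) * ∑ l ∈ Finset.Icc 1 L, (n l (aopt l)) ^ 2) :=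
          Real.sqrt_le_sqrt h
      _ = Real.sqrt (L:ℝ) * Real.sqrt (∑ l ∈ Finset.Icc 1 L, (n l (aopt l)) ^ 2) :=
          Real.sqrt_mul hL0.le _
  have h4βL : (0:ℝ) ≤ 4 * (k / c) * β L := mul_nonneg (by positivity) hβL
  have hHead : ∑ l ∈ Finset.Icc 1 L, (4 * (k / c) * β l * n l (aopt l)) ≤
      Real.sqrt (32 * M) * (k / c) * β L * Real.sqrt ((d:ℝ) * L) *
        Real.sqrt ((L:ℝ) * lg1 + lg2) := by
    have s1 := le_trans hA (mul_le_mul_of_nonneg_left hcs h4βL)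
    have s2 : Real.sqrt (∑ l ∈ Finset.Icc 1 L, (n l (aopt l)) ^ 2) ≤
        Real.sqrt (2 * M * ((d:ℝ) * L * lg1 + (d:ℝ) * lg2)) := Real.sqrt_le_sqrt hpot
    have s3 := mul_le_mul_of_nonneg_left
      (mul_le_mul_of_nonneg_left s2 (Real.sqrt_nonneg (L:ℝ))) h4βL
    refine le_trans (le_trans s1 s3) (le_of_eq ?_)
    have e2 : Real.sqrt (2 * M * ((d:ℝ) * L * lg1 + (d:ℝ) * lg2)) =
        Real.sqrt 2 * (Real.sqrt M * (Real.sqrt (d:ℝ) * Real.sqrt ((L:ℝ) * lg1 + lg2))) := by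
      rw [show 2 * M * ((d:ℝ) * L * lg1 + (d:ℝ) * lg2)
            = 2 * (M * ((d:ℝ) * ((L:ℝ) * lg1 + lg2))) by ring,
        Real.sqrt_mul (by norm_num : (0:ℝ) ≤ 2), Real.sqrt_mul hM0,
        Real.sqrt_mul (Nat.cast_nonneg d)]
    have e3 : Real.sqrt (32 * M) = 4 * (Real.sqrt 2 * Real.sqrt M) := by
      rw [show (32:ℝ) * M = 4 ^ 2 * (2 * M) by ring, Real.sqrt_mul (by positivity),
        Real.sqrt_sq (by norm_num : (0:ℝ) ≤ 4), Real.sqrt_mul (by norm_num : (0:ℝ) ≤ 2)]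
    have e4 : Real.sqrt ((d:ℝ) * L) = Real.sqrt (d:ℝ) * Real.sqrt (L:ℝ) :=
      Real.sqrt_mul (Nat.cast_nonneg d) _
    rw [e2, e3, e4]; ring
  -- the variation double sum
  have hdouble : ∑ l ∈ Finset.Icc 1 L,
      (∑ s ∈ Finset.Icc ((l : ℤ) - D) ((l : ℤ) - 1), Δ s) ≤ (D:ℝ) * BL := by
    have key : ∀ l : ℕ, (∑ s ∈ Finset.Icc ((l : ℤ) - D) ((l : ℤ) - 1), Δ s)
        = ∑ s ∈ Finset.Icc (1:ℤ) ((L:ℤ) - 1),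
            (if s ∈ Finset.Icc ((l : ℤ) - D) ((l : ℤ) - 1) then Δ s else 0) := by
      intro l
      rw [Finset.sum_ite_mem]
      refine (Finset.sum_subset Finset.inter_subset_right ?_).symm
      intro s hs hns
      apply hΔout
      have h1 : s ∉ Finset.Icc (1:ℤ) ((L:ℤ) - 1) := fun h => hns (Finset.mem_inter.mpr ⟨h, hs⟩)
      rw [Finset.mem_Icc] at h1
      omega
    calc ∑ l ∈ Finset.Icc 1 L, (∑ s ∈ Finset.Icc ((l : ℤ) - D) ((l : ℤ) - 1), Δ s)
        = ∑ l ∈ Finset.Icc 1 L, ∑ s ∈ Finset.Icc (1:ℤ) ((L:ℤ) - 1),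
            (if s ∈ Finset.Icc ((l : ℤ) - D) ((l : ℤ) - 1) then Δ s else 0) :=
          Finset.sum_congr rfl fun l _ => key l
      _ = ∑ s ∈ Finset.Icc (1:ℤ) ((L:ℤ) - 1), ∑ l ∈ Finset.Icc 1 L,
            (if s ∈ Finset.Icc ((l : ℤ) - D) ((l : ℤ) - 1) then Δ s else 0) :=
          Finset.sum_comm
      _ ≤ ∑ s ∈ Finset.Icc (1:ℤ) ((L:ℤ) - 1), (D:ℝ) * Δ s := by
          refine Finset.sum_le_sum fun s _ => ?_
          rw [← Finset.sum_filter, Finset.sum_const, nsmul_eq_mul]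
          refine mul_le_mul_of_nonneg_right ?_ (hΔ0 s)
          have hcard : ((Finset.Icc 1 L).filter
              (fun l : ℕ => s ∈ Finset.Icc ((l : ℤ) - D) ((l : ℤ) - 1))).card ≤ D := by
            have hsub : ((Finset.Icc 1 L).filter
                (fun l : ℕ => s ∈ Finset.Icc ((l : ℤ) - D) ((l : ℤ) - 1))).card ≤
                (Finset.Icc (s + 1) (s + D)).card := by
              refine Finset.card_le_card_of_injOn (fun l : ℕ => (l:ℤ)) ?_ ?_
              · intro l hl
                simp only [Finset.mem_coe, Finset.mem_filter, Finset.mem_Icc] at hl ⊢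
                omega
              · intro a _ b _ hab
                simpa using hab
            rw [Int.card_Icc] at hsub
            omega
          exact_mod_cast hcard
      _ = (D:ℝ) * ∑ s ∈ Finset.Icc (1:ℤ) ((L:ℤ) - 1), Δ s := (Finset.mul_sum _ _ _).symm
      _ ≤ (D:ℝ) * BL := mul_le_mul_of_nonneg_left hbudget (Nat.cast_nonneg D)
  -- rewrite the tail sum
  have hsumeq : ∑ l ∈ Finset.Icc 1 L,
      (2 * (Ac * (Bc + Ec * ∑ s ∈ Finset.Icc ((l : ℤ) - D) ((l : ℤ) - 1), Δ s)))
      = 2 * Ac * Bc * (L:ℝ) + 2 * Ac * Ec *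
          (∑ l ∈ Finset.Icc 1 L, ∑ s ∈ Finset.Icc ((l : ℤ) - D) ((l : ℤ) - 1), Δ s) := by
    calc ∑ l ∈ Finset.Icc 1 L,
        (2 * (Ac * (Bc + Ec * ∑ s ∈ Finset.Icc ((l : ℤ) - D) ((l : ℤ) - 1), Δ s)))
        = ∑ l ∈ Finset.Icc 1 L, (2 * Ac * Bc +
            2 * Ac * Ec * ∑ s ∈ Finset.Icc ((l : ℤ) - D) ((l : ℤ) - 1), Δ s) :=
          Finset.sum_congr rfl fun l _ => by ring
      _ = (Finset.Icc 1 L).card • (2 * Ac * Bc) + 2 * Ac * Ec *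
            (∑ l ∈ Finset.Icc 1 L, ∑ s ∈ Finset.Icc ((l : ℤ) - D) ((l : ℤ) - 1), Δ s) := by
          rw [Finset.sum_add_distrib, Finset.sum_const, ← Finset.mul_sum]
      _ = _ := by
          rw [Nat.card_Icc, nsmul_eq_mul, Nat.add_sub_cancel]; ring
  have hsl0 : (0:ℝ) < Real.sqrt lam := Real.sqrt_pos.mpr hlam
  have hsg0 : (0:ℝ) < Real.sqrt (1 - γ) := Real.sqrt_pos.mpr hγ'
  -- bound on Ac
  have hAcle : Ac ≤ (2 * k * U / c) * (1 + U / (Real.sqrt lam * Real.sqrt (1 - γ))) := by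
    rw [hAcdef]
    refine mul_le_mul_of_nonneg_left ?_ (by positivity)
    have ht : (0:ℝ) ≤ U ^ 2 / (lam * (1 - γ)) :=
      div_nonneg (sq_nonneg U) (mul_nonneg hlam.le hγ'.le)
    calc Real.sqrt (1 + U ^ 2 / (lam * (1 - γ)))
        ≤ Real.sqrt ((1 + Real.sqrt (U ^ 2 / (lam * (1 - γ)))) ^ 2) := by
          refine Real.sqrt_le_sqrt ?_
          nlinarith [Real.sq_sqrt ht, Real.sqrt_nonneg (U ^ 2 / (lam * (1 - γ)))]
      _ = 1 + Real.sqrt (U ^ 2 / (lam * (1 - γ))) :=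
          Real.sqrt_sq (by positivity)
      _ = 1 + U / (Real.sqrt lam * Real.sqrt (1 - γ)) := by
          rw [Real.sqrt_div (sq_nonneg U), Real.sqrt_sq hU.le, Real.sqrt_mul hlam.le]
  -- final identity for the tail
  have hfin : 2 * ((2 * k * U / c) * (1 + U / (Real.sqrt lam * Real.sqrt (1 - γ)))) * Bc * (L:ℝ)
      + 2 * ((2 * k * U / c) * (1 + U / (Real.sqrt lam * Real.sqrt (1 - γ)))) * Ec * ((D:ℝ) * BL)
      = (8 * k ^ 2 * S * U ^ 3 * γ ^ D / (c * lam * (1 - γ))) * L +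
        (8 * k ^ 2 * S * U ^ 4 * γ ^ D /
          (c * lam ^ ((3 : ℝ) / 2) * (1 - γ) ^ ((3 : ℝ) / 2))) * L +
        (4 * k ^ 2 * U * D / (c * Real.sqrt lam)) * Real.sqrt ((d:ℝ) / (1 - γ)) * BL +
        (4 * k ^ 2 * U ^ 2 * D / (c * lam)) * (Real.sqrt (d:ℝ) / (1 - γ)) * BL := by
    rw [hBcdef, hEcdef]
    rw [show Real.sqrt ((d:ℝ) / (lam * (1 - γ)))
          = Real.sqrt (d:ℝ) / (Real.sqrt lam * Real.sqrt (1 - γ)) by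
        rw [Real.sqrt_div (Nat.cast_nonneg d), Real.sqrt_mul hlam.le],
      show Real.sqrt ((d:ℝ) / (1 - γ)) = Real.sqrt (d:ℝ) / Real.sqrt (1 - γ) from
        Real.sqrt_div (Nat.cast_nonneg d) _,
      show lam ^ ((3 : ℝ) / 2) = lam * Real.sqrt lam by
        rw [show (3:ℝ)/2 = 1 + 1/2 by norm_num, Real.rpow_add hlam, Real.rpow_one,
          ← Real.sqrt_eq_rpow],
      show (1 - γ) ^ ((3 : ℝ) / 2) = (1 - γ) * Real.sqrt (1 - γ) by
        rw [show (3:ℝ)/2 = 1 + 1/2 by norm_num, Real.rpow_add hγ', Real.rpow_one,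
          ← Real.sqrt_eq_rpow]]
    generalize hslg : Real.sqrt lam = sl at hsl0
    generalize hsgg : Real.sqrt (1 - γ) = sg at hsg0
    have hlam_eq : lam = sl ^ 2 := by rw [← hslg, Real.sq_sqrt hlam.le]
    have hγeq : 1 - γ = sg ^ 2 := by rw [← hsgg, Real.sq_sqrt hγ'.le]
    rw [hlam_eq, hγeq]
    field_simp
    ring
  -- tail bound
  have hTail : ∑ l ∈ Finset.Icc 1 L,
      (2 * (Ac * (Bc + Ec * ∑ s ∈ Finset.Icc ((l : ℤ) - D) ((l : ℤ) - 1), Δ s))) ≤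
      (8 * k ^ 2 * S * U ^ 3 * γ ^ D / (c * lam * (1 - γ))) * L +
      (8 * k ^ 2 * S * U ^ 4 * γ ^ D /
        (c * lam ^ ((3 : ℝ) / 2) * (1 - γ) ^ ((3 : ℝ) / 2))) * L +
      (4 * k ^ 2 * U * D / (c * Real.sqrt lam)) * Real.sqrt ((d:ℝ) / (1 - γ)) * BL +
      (4 * k ^ 2 * U ^ 2 * D / (c * lam)) * (Real.sqrt (d:ℝ) / (1 - γ)) * BL := by
    rw [hsumeq, ← hfin]
    have hD0 : (0:ℝ) ≤ (D:ℝ) * BL := mul_nonneg (Nat.cast_nonneg D) hBL.le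
    set Ac' := (2 * k * U / c) * (1 + U / (Real.sqrt lam * Real.sqrt (1 - γ))) with hAc'def
    have k1 : 2 * Ac * Ec *
        (∑ l ∈ Finset.Icc 1 L, ∑ s ∈ Finset.Icc ((l : ℤ) - D) ((l : ℤ) - 1), Δ s)
        ≤ 2 * Ac * Ec * ((D:ℝ) * BL) :=
      mul_le_mul_of_nonneg_left hdouble
        (mul_nonneg (mul_nonneg (by norm_num) hAc0) hEc0)
    have k2 : 2 * Ac * Bc * (L:ℝ) ≤ 2 * Ac' * Bc * (L:ℝ) := by
      have := mul_le_mul_of_nonneg_left hAcle (by norm_num : (0:ℝ) ≤ 2)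
      have := mul_le_mul_of_nonneg_right this hBc0
      exact mul_le_mul_of_nonneg_right this (Nat.cast_nonneg L)
    have k3 : 2 * Ac * Ec * ((D:ℝ) * BL) ≤ 2 * Ac' * Ec * ((D:ℝ) * BL) := by
      have := mul_le_mul_of_nonneg_left hAcle (by norm_num : (0:ℝ) ≤ 2)
      have := mul_le_mul_of_nonneg_right this hEc0
      exact mul_le_mul_of_nonneg_right this hD0
    linarith [k1, k2, k3]
  calc ∑ l ∈ Finset.Icc 1 L, (⟪x l, θstar l (aopt l)⟫ - ⟪x l, θstar l (asel l)⟫)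
      ≤ ∑ l ∈ Finset.Icc 1 L, (4 * (k / c) * β l * n l (aopt l)) +
        ∑ l ∈ Finset.Icc 1 L,
          (2 * (Ac * (Bc + Ec * ∑ s ∈ Finset.Icc ((l : ℤ) - D) ((l : ℤ) - 1), Δ s))) := hsum
    _ ≤ Real.sqrt (32 * M) * (k / c) * β L * Real.sqrt ((d:ℝ) * L) *
          Real.sqrt ((L:ℝ) * lg1 + lg2) +
        ((8 * k ^ 2 * S * U ^ 3 * γ ^ D / (c * lam * (1 - γ))) * L +
        (8 * k ^ 2 * S * U ^ 4 * γ ^ D /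
          (c * lam ^ ((3 : ℝ) / 2) * (1 - γ) ^ ((3 : ℝ) / 2))) * L +
        (4 * k ^ 2 * U * D / (c * Real.sqrt lam)) * Real.sqrt ((d:ℝ) / (1 - γ)) * BL +
        (4 * k ^ 2 * U ^ 2 * D / (c * lam)) * (Real.sqrt (d:ℝ) / (1 - γ)) * BL) :=
      add_le_add hHead hTail
    _ = _ := by ring
end

section
/- Fix an integer d ≥ 1 and reals λ, U, S, σ, B > 0, δ ∈ (0,1), and k ≥ c > 0. For each integer L with √d·L > B, set γ_L := 1 − (B/(√d·L))^{2/5} ∈ (0,1), D_L := ⌈log L / (1−γ_L)⌉, β(L) := √λ·S + σ·√( 2·log(1/δ) + d·log(1 + U²(1−γ_L^{2L})/(λd(1−γ_L²))) ), and define F(L) := √(32·max(1, U²/λ))·(k/c)·β(L)·√(dL)·√( L·log(1/γ_L) + log(1 + U²(1−γ_L^{L})/(λd(1−γ_L))) ) + (8k²SU³γ_L^{D_L}/(cλ(1−γ_L)))·L + (8k²SU⁴γ_L^{D_L}/(cλ^{3/2}(1−γ_L)^{3/2}))·L + (4k²U·D_L/(c√λ))·√(d/(1−γ_L))·B + (4k²U²·D_L/(cλ))·(√d/(1−γ_L))·B.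 Then F(L) = O( L^{4/5}·log L ) as L → ∞. -/
open Filter Asymptotics

set_option maxHeartbeats 1600000

/-- **Corollary 1** made precise: the regret upper bound of Theorem 1, evaluated at the
discount factor `γ_L = 1 − (B/(√d·L))^(2/5)` and window length `D_L = ⌈log L/(1−γ_L)⌉`,
is `O(L^(4/5)·log L)` as `L → ∞`. -/
theorem dess_corollary_asymptotics
    (d : ℕ) (hd : 1 ≤ d)
    (lam U S σ B δ k c : ℝ)
    (hlam : 0 < lam) (hU : 0 < U) (hS : 0 < S) (hσ : 0 < σ) (hB : 0 < B)
    (hδ : δ ∈ Set.Ioo (0 : ℝ) 1) (hc : 0 < c) (hk : 0 < k) (hck : c ≤ k)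
    (γ : ℕ → ℝ) (Dw : ℕ → ℤ) (β F : ℕ → ℝ)
    (hγ : ∀ L : ℕ, B < Real.sqrt d * L →
      γ L = 1 - (B / (Real.sqrt d * L)) ^ ((2 : ℝ) / 5))
    (hDw : ∀ L : ℕ, B < Real.sqrt d * L →
      Dw L = ⌈Real.log L / (1 - γ L)⌉)
    (hβ : ∀ L : ℕ, B < Real.sqrt d * L →
      β L = Real.sqrt lam * S + σ * Real.sqrt (2 * Real.log (1 / δ) +
        d * Real.log (1 + U ^ 2 * (1 - γ L ^ (2 * L)) / (lam * d * (1 - γ L ^ 2)))))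
    (hF : ∀ L : ℕ, B < Real.sqrt d * L →
      F L = Real.sqrt (32 * max 1 (U ^ 2 / lam)) * (k / c) * β L * Real.sqrt (d * L) *
          Real.sqrt (L * Real.log (1 / γ L) +
            Real.log (1 + U ^ 2 * (1 - γ L ^ L) / (lam * d * (1 - γ L)))) +
        (8 * k ^ 2 * S * U ^ 3 * γ L ^ Dw L / (c * lam * (1 - γ L))) * L +
        (8 * k ^ 2 * S * U ^ 4 * γ L ^ Dw L /
          (c * lam ^ ((3 : ℝ) / 2) * (1 - γ L) ^ ((3 : ℝ) / 2))) * L +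
        (4 * k ^ 2 * U * Dw L / (c * Real.sqrt lam)) * Real.sqrt (d / (1 - γ L)) * B +
        (4 * k ^ 2 * U ^ 2 * Dw L / (c * lam)) * (Real.sqrt d / (1 - γ L)) * B) :
    F =O[atTop] fun L : ℕ => (L : ℝ) ^ ((4 : ℝ) / 5) * Real.log L := by
  have hd0 : (0:ℝ) < d := by exact_mod_cast Nat.lt_of_lt_of_le Nat.zero_lt_one hd
  have hd1 : (1:ℝ) ≤ d := by exact_mod_cast hd
  have hsd1 : (1:ℝ) ≤ Real.sqrt d := by
    rw [show (1:ℝ) = Real.sqrt 1 by simp]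
    exact Real.sqrt_le_sqrt hd1
  have hsd : (0:ℝ) < Real.sqrt d := lt_of_lt_of_le one_pos hsd1
  set C : ℝ := (B / Real.sqrt d) ^ ((2:ℝ)/5) with hCdef
  have hC : 0 < C := Real.rpow_pos_of_pos (div_pos hB hsd) _
  set A : ℝ := U^2 / (lam * d * C) with hAdef
  have hA : 0 < A := div_pos (pow_pos hU 2) (by positivity)
  have hlog1A : 0 < Real.log (1 + A) := Real.log_pos (by linarith)
  -- the five constants
  set Kβ : ℝ := Real.sqrt lam * S +
      σ * Real.sqrt (2 * Real.log (1/δ) + d * Real.log (1+A) + 2/5 * d) with hKβdef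
  have hKβ0 : 0 ≤ Kβ := by
    rw [hKβdef]; positivity
  set Kin : ℝ := 2*C + (Real.log (1+A) + 2/5) * (5/3) with hKindef
  have hKin0 : 0 ≤ Kin := by rw [hKindef]; linarith
  set c1 : ℝ := Real.sqrt (32 * max 1 (U ^ 2 / lam)) * (k / c) with hc1def
  have hc10 : 0 ≤ c1 := mul_nonneg (Real.sqrt_nonneg _) (div_nonneg hk.le hc.le)
  set K1 : ℝ := c1 * Kβ * (Real.sqrt d * Real.sqrt Kin) with hK1def
  have hK10 : 0 ≤ K1 := by
    rw [hK1def]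
    exact mul_nonneg (mul_nonneg hc10 hKβ0) (mul_nonneg (Real.sqrt_nonneg _) (Real.sqrt_nonneg _))
  set K2 : ℝ := 8 * k^2 * S * U^3 / (c * lam * C) with hK2def
  set K3 : ℝ := 8 * k^2 * S * U^4 / (c * lam ^ ((3:ℝ)/2) * C ^ ((3:ℝ)/2)) with hK3def
  set K4 : ℝ := 8 * k^2 * U * Real.sqrt d * B / (c * Real.sqrt lam * C * Real.sqrt C) with hK4def
  set K5 : ℝ := 8 * k^2 * U^2 * Real.sqrt d * B / (c * lam * C^2) with hK5def
  clear_value A Kβ Kin c1 K1 K2 K3 K4 K5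
  rw [isBigO_iff]
  refine ⟨K1 + K2 + K3 + K4 + K5, ?_⟩
  have hev1 : ∀ᶠ L : ℕ in atTop, (3:ℝ) ≤ (L:ℝ) :=
    tendsto_natCast_atTop_atTop.eventually_ge_atTop 3
  have hev2 : ∀ᶠ L : ℕ in atTop, B < Real.sqrt d * (L:ℝ) :=
    (Filter.Tendsto.const_mul_atTop hsd tendsto_natCast_atTop_atTop).eventually_gt_atTop B
  have htend : Filter.Tendsto (fun L : ℕ => C / (L:ℝ)^((2:ℝ)/5)) atTop (nhds 0) := by
    apply Filter.Tendsto.div_atTop tendsto_const_nhds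
    exact (tendsto_rpow_atTop (by norm_num)).comp tendsto_natCast_atTop_atTop
  have hev3 : ∀ᶠ L : ℕ in atTop, C / (L:ℝ)^((2:ℝ)/5) < 1/2 :=
    htend.eventually_lt_const (by norm_num)
  clear_value C
  filter_upwards [hev1, hev2, hev3] with L hx3 hBL hehalf
  have hFL := hF L hBL
  have hβL := hβ L hBL
  have hDwL := hDw L hBL
  have hγLdef := hγ L hBL
  clear hF hβ hDw hγ
  set x : ℝ := (L:ℝ) with hxdef
  clear_value x
  have hx0 : (0:ℝ) < x := by linarith
  have hxne : x ≠ 0 := ne_of_gt hx0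
  have hx1 : (1:ℝ) ≤ x := by linarith
  set p : ℝ := x ^ ((2:ℝ)/5) with hpdef
  clear_value p
  have hp1 : (1:ℝ) ≤ p := by rw [hpdef]; exact Real.one_le_rpow hx1 (by norm_num)
  have hp0 : (0:ℝ) < p := lt_of_lt_of_le one_pos hp1
  have hpne : p ≠ 0 := ne_of_gt hp0
  set e : ℝ := C / p with hedef
  clear_value e
  have he0 : 0 < e := by rw [hedef]; exact div_pos hC hp0
  have hene : e ≠ 0 := ne_of_gt he0
  have heh : e ≤ 1/2 := le_of_lt hehalf
  have hCne : C ≠ 0 := ne_of_gt hC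
  have hcne : c ≠ 0 := ne_of_gt hc
  have hlamne : lam ≠ 0 := ne_of_gt hlam
  have hd0ne : (d:ℝ) ≠ 0 := ne_of_gt hd0
  have hγL : γ L = 1 - e := by
    rw [hγLdef, hedef, hpdef, hCdef, ← div_div,
      Real.div_rpow (div_pos hB hsd).le hx0.le]
  have hge : 1 - γ L = e := by rw [hγL]; ring
  have hγ0 : 0 < γ L := by rw [hγL]; linarith
  have hγ1 : γ L < 1 := by rw [hγL]; linarith
  -- log x ≥ 1
  have hlogx : 1 ≤ Real.log x := by
    have h3 : Real.exp 1 ≤ 3 := le_trans Real.exp_one_lt_d9.le (by norm_num)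
    calc (1:ℝ) = Real.log (Real.exp 1) := (Real.log_exp 1).symm
      _ ≤ Real.log x := Real.log_le_log (Real.exp_pos 1) (h3.trans hx3)
  have hlogx0 : 0 ≤ Real.log x := by linarith
  -- rpow arithmetic
  have hx35 : x ^ ((3:ℝ)/5) = x / p := by
    rw [hpdef, eq_div_iff (ne_of_gt (Real.rpow_pos_of_pos hx0 ((2:ℝ)/5))),
      ← Real.rpow_add hx0, show (3:ℝ)/5 + 2/5 = 1 by norm_num, Real.rpow_one]
  have hx350 : 0 < x ^ ((3:ℝ)/5) := Real.rpow_pos_of_pos hx0 _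
  have hp32 : p ^ ((3:ℝ)/2) = x ^ ((3:ℝ)/5) := by
    rw [hpdef, ← Real.rpow_mul hx0.le]; norm_num
  have hsqp : Real.sqrt p = x ^ ((1:ℝ)/5) := by
    rw [Real.sqrt_eq_rpow, hpdef, ← Real.rpow_mul hx0.le]; norm_num
  have hp2 : p * p = x ^ ((4:ℝ)/5) := by
    rw [hpdef, ← Real.rpow_add hx0]; norm_num
  have hple : p ≤ x ^ ((4:ℝ)/5) := by
    rw [hpdef]; exact Real.rpow_le_rpow_of_exponent_le hx1 (by norm_num)
  have hx35le : x ^ ((3:ℝ)/5) ≤ x ^ ((4:ℝ)/5) :=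
    Real.rpow_le_rpow_of_exponent_le hx1 (by norm_num)
  have hx45 : 0 < x ^ ((4:ℝ)/5) := Real.rpow_pos_of_pos hx0 _
  -- log x ≤ (5/3) x^{3/5}
  have hlogx35 : Real.log x ≤ 5/3 * x ^ ((3:ℝ)/5) := by
    have h1 : Real.log (x ^ ((3:ℝ)/5)) ≤ x ^ ((3:ℝ)/5) - 1 :=
      Real.log_le_sub_one_of_pos hx350
    rw [Real.log_rpow hx0] at h1
    linarith
  -- window length bounds
  have hDeq : Dw L = ⌈Real.log x / e⌉ := by rw [hDwL, hge]
  set r : ℝ := Real.log x / e with hrdef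
  clear_value r
  have hr1 : 1 ≤ r := by
    rw [hrdef, le_div_iff₀ he0]; linarith
  have hDlb : r ≤ (Dw L : ℝ) := by rw [hDeq, hrdef]; exact Int.le_ceil _
  have hDub : (Dw L : ℝ) ≤ 2 * r := by
    rw [hDeq]
    have h1 := Int.ceil_lt_add_one (Real.log x / e)
    have h2 : Real.log x / e = r := hrdef.symm
    rw [h2] at h1
    linarith
  have hD0 : (0:ℝ) ≤ (Dw L : ℝ) := le_trans (by linarith) hDlb
  -- γ^D ≤ 1/x
  have hlogγ : Real.log (γ L) ≤ -e := by
    have h1 := Real.log_le_sub_one_of_pos hγ0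
    rw [hγL] at h1 ⊢; linarith
  have hγD : γ L ^ Dw L ≤ 1 / x := by
    have h1 : γ L ^ Dw L = γ L ^ ((Dw L : ℤ) : ℝ) := (Real.rpow_intCast _ _).symm
    have h2 : γ L ^ ((Dw L : ℤ) : ℝ) ≤ γ L ^ r :=
      Real.rpow_le_rpow_of_exponent_ge hγ0 hγ1.le hDlb
    have h3 : γ L ^ r ≤ 1 / x := by
      rw [Real.rpow_def_of_pos hγ0]
      have h4 : Real.log (γ L) * r ≤ -e * r :=
        mul_le_mul_of_nonneg_right hlogγ (by linarith)
      have h5 : -e * r = -Real.log x := by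
        rw [hrdef]; field_simp
      calc Real.exp (Real.log (γ L) * r) ≤ Real.exp (-Real.log x) :=
            Real.exp_le_exp.2 (by rw [← h5]; exact h4)
        _ = 1 / x := by rw [Real.exp_neg, Real.exp_log hx0, one_div]
    rw [h1]; exact h2.trans h3
  have hγD0 : 0 ≤ γ L ^ Dw L := zpow_nonneg hγ0.le _
  -- A * p identity
  have hAp : U ^ 2 / (lam * d * e) = A * p := by
    rw [hAdef, hedef, show lam * (d:ℝ) * (C / p) = lam * (d:ℝ) * C / p by ring,
      div_div_eq_mul_div]
    ring
  have hAp0 : 0 < A * p := mul_pos hA hp0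
  -- log bounds : both "1 + ..." terms bounded by log(1+A) + (2/5) log x
  have hlogbound : ∀ y : ℝ, 0 ≤ y → y ≤ U ^ 2 / (lam * d * e) →
      Real.log (1 + y) ≤ Real.log (1+A) + 2/5 * Real.log x := by
    intro y hy0 hyle
    have h1 : Real.log (1 + y) ≤ Real.log (1 + A * p) :=
      Real.log_le_log (by linarith) (by rw [← hAp]; linarith)
    have h2 : 1 + A * p ≤ (1 + A) * p := by
      have : (1 + A) * p = p + A * p := by ring
      linarith
    have h3 : Real.log (1 + A * p) ≤ Real.log ((1+A) * p) :=
      Real.log_le_log (by linarith) h2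
    have h4 : Real.log ((1+A)*p) = Real.log (1+A) + 2/5 * Real.log x := by
      rw [Real.log_mul (by linarith) hpne, hpdef, Real.log_rpow hx0]
    linarith
  -- bound on the first fraction (inside β)
  have hγ2L1 : γ L ^ (2*L) ≤ 1 := pow_le_one₀ hγ0.le hγ1.le
  have hγ2L0 : 0 ≤ γ L ^ (2*L) := pow_nonneg hγ0.le _
  have hγsq : (0:ℝ) < 1 - γ L ^ 2 := by
    rw [hγL, show (1:ℝ) - (1 - e)^2 = e * (2 - e) by ring]
    exact mul_pos he0 (by linarith)
  have hfrac1le : U ^ 2 * (1 - γ L ^ (2*L)) / (lam * d * (1 - γ L ^ 2)) ≤ U ^ 2 / (lam * d * e) := by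
    have hnum : U ^ 2 * (1 - γ L ^ (2*L)) ≤ U ^ 2 := by
      linarith [mul_nonneg (pow_nonneg hU.le 2) hγ2L0]
    have hden : lam * d * e ≤ lam * d * (1 - γ L ^ 2) := by
      have h2 : e ≤ 1 - γ L ^ 2 := by
        rw [hγL, show (1:ℝ) - (1 - e)^2 = e * (2 - e) by ring]
        exact le_mul_of_one_le_right he0.le (by linarith)
      exact mul_le_mul_of_nonneg_left h2 (by positivity)
    exact div_le_div₀ (by positivity) hnum (by positivity) hden
  have hfrac10 : 0 ≤ U ^ 2 * (1 - γ L ^ (2*L)) / (lam * d * (1 - γ L ^ 2)) :=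
    div_nonneg (mul_nonneg (by positivity) (by linarith))
      (mul_nonneg (mul_nonneg hlam.le hd0.le) hγsq.le)
  have hγL1 : γ L ^ L ≤ 1 := pow_le_one₀ hγ0.le hγ1.le
  have hγL0 : 0 ≤ γ L ^ L := pow_nonneg hγ0.le _
  have hfrac2le : U ^ 2 * (1 - γ L ^ L) / (lam * d * (1 - γ L)) ≤ U ^ 2 / (lam * d * e) := by
    rw [hge]
    have hnum : U ^ 2 * (1 - γ L ^ L) ≤ U ^ 2 := by
      linarith [mul_nonneg (pow_nonneg hU.le 2) hγL0]
    exact div_le_div₀ (by positivity) hnum (by positivity) le_rfl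
  have hfrac20 : 0 ≤ U ^ 2 * (1 - γ L ^ L) / (lam * d * (1 - γ L)) := by
    rw [hge]
    exact div_nonneg (mul_nonneg (by positivity) (by linarith))
      (mul_nonneg (mul_nonneg hlam.le hd0.le) he0.le)
  -- β bound
  have hlogδ : 0 < Real.log (1/δ) := Real.log_pos (by
    rw [lt_div_iff₀ hδ.1]; linarith [hδ.2])
  have hsqlogx1 : 1 ≤ Real.sqrt (Real.log x) := by
    rw [show (1:ℝ) = Real.sqrt 1 by simp]
    exact Real.sqrt_le_sqrt hlogx
  have hdlog1A : 0 ≤ (d:ℝ) * Real.log (1+A) := mul_nonneg hd0.le hlog1A.le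
  have hβle : β L ≤ Kβ * Real.sqrt (Real.log x) := by
    rw [hβL]
    have h1 := hlogbound _ hfrac10 hfrac1le
    have h2 : 2 * Real.log (1/δ) +
        d * Real.log (1 + U ^ 2 * (1 - γ L ^ (2*L)) / (lam * d * (1 - γ L ^ 2)))
        ≤ (2 * Real.log (1/δ) + d * Real.log (1+A) + 2/5 * d) * Real.log x := by
      have h3 : (d:ℝ) * Real.log (1 + U ^ 2 * (1 - γ L ^ (2*L)) / (lam * d * (1 - γ L ^ 2)))
          ≤ d * (Real.log (1+A) + 2/5 * Real.log x) :=
        mul_le_mul_of_nonneg_left h1 hd0.le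
      have h5 : 2 * Real.log (1/δ) ≤ 2 * Real.log (1/δ) * Real.log x :=
        le_mul_of_one_le_right (by linarith) hlogx
      have h6 : (d:ℝ) * Real.log (1+A) ≤ d * Real.log (1+A) * Real.log x :=
        le_mul_of_one_le_right hdlog1A hlogx
      have h8 : (2 * Real.log (1/δ) + ↑d * Real.log (1+A) + 2/5 * ↑d) * Real.log x
          = 2 * Real.log (1/δ) * Real.log x + ↑d * Real.log (1+A) * Real.log x
            + 2/5 * (↑d * Real.log x) := by ring
      have h9 : (d:ℝ) * (Real.log (1+A) + 2/5 * Real.log x)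
          = ↑d * Real.log (1+A) + 2/5 * (↑d * Real.log x) := by ring
      linarith
    have h4 : Real.sqrt (2 * Real.log (1/δ) +
        d * Real.log (1 + U ^ 2 * (1 - γ L ^ (2*L)) / (lam * d * (1 - γ L ^ 2))))
        ≤ Real.sqrt (2 * Real.log (1/δ) + d * Real.log (1+A) + 2/5 * d) *
          Real.sqrt (Real.log x) := by
      rw [← Real.sqrt_mul (by linarith [hlogδ.le, hd0.le])]
      exact Real.sqrt_le_sqrt h2
    have h5 : Real.sqrt lam * S ≤ Real.sqrt lam * S * Real.sqrt (Real.log x) :=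
      le_mul_of_one_le_right (by positivity) hsqlogx1
    have h7 : σ * Real.sqrt (2 * Real.log (1/δ) +
        d * Real.log (1 + U ^ 2 * (1 - γ L ^ (2*L)) / (lam * d * (1 - γ L ^ 2))))
        ≤ σ * (Real.sqrt (2 * Real.log (1/δ) + d * Real.log (1+A) + 2/5 * d) *
          Real.sqrt (Real.log x)) :=
      mul_le_mul_of_nonneg_left h4 hσ.le
    have h8 : Kβ * Real.sqrt (Real.log x) = Real.sqrt lam * S * Real.sqrt (Real.log x) +
        σ * (Real.sqrt (2 * Real.log (1/δ) + d * Real.log (1+A) + 2/5 * d) *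
          Real.sqrt (Real.log x)) := by
      rw [hKβdef]; ring
    linarith
  have hβ0 : 0 ≤ β L := by
    rw [hβL]; positivity
  -- inner sqrt bound for term 1
  have hloginvγ : Real.log (1 / γ L) ≤ 2 * e := by
    have h1 : Real.log (1 / γ L) ≤ 1 / γ L - 1 := Real.log_le_sub_one_of_pos (by positivity)
    have h2 : 1 / γ L - 1 ≤ 2 * e := by
      rw [div_sub_one (ne_of_gt hγ0), hγL]
      rw [div_le_iff₀ (by linarith : (0:ℝ) < 1 - e)]
      linarith [mul_nonneg he0.le (show (0:ℝ) ≤ 1 - 2*e by linarith)]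
    linarith
  have hinner : x * Real.log (1 / γ L) +
      Real.log (1 + U ^ 2 * (1 - γ L ^ L) / (lam * d * (1 - γ L))) ≤ Kin * x ^ ((3:ℝ)/5) := by
    have h1 : x * Real.log (1 / γ L) ≤ 2 * C * x ^ ((3:ℝ)/5) := by
      have h2 : x * Real.log (1 / γ L) ≤ x * (2 * e) :=
        mul_le_mul_of_nonneg_left hloginvγ hx0.le
      have h3 : x * (2 * e) = 2 * C * (x / p) := by rw [hedef]; field_simp
      rw [hx35]; linarith
    have h4 := hlogbound _ hfrac20 hfrac2le
    have h5 : Real.log (1+A) + 2/5 * Real.log x ≤ (Real.log (1+A) + 2/5) * Real.log x := by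
      have := le_mul_of_one_le_right hlog1A.le hlogx
      have hexp : (Real.log (1+A) + 2/5) * Real.log x
          = Real.log (1+A) * Real.log x + 2/5 * Real.log x := by ring
      linarith
    have h6 : (Real.log (1+A) + 2/5) * Real.log x
        ≤ (Real.log (1+A) + 2/5) * (5/3 * x ^ ((3:ℝ)/5)) :=
      mul_le_mul_of_nonneg_left hlogx35 (by linarith)
    have h7 : Kin * x ^ ((3:ℝ)/5) = 2 * C * x ^ ((3:ℝ)/5) +
        (Real.log (1+A) + 2/5) * (5/3 * x ^ ((3:ℝ)/5)) := by
      rw [hKindef]; ring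
    linarith
  -- TERM 1
  have hterm1 : c1 * β L * Real.sqrt (d * x) *
      Real.sqrt (x * Real.log (1 / γ L) +
        Real.log (1 + U ^ 2 * (1 - γ L ^ L) / (lam * d * (1 - γ L))))
      ≤ K1 * (x ^ ((4:ℝ)/5) * Real.log x) := by
    have hs2 : Real.sqrt (d * x) = Real.sqrt d * x ^ ((1:ℝ)/2) := by
      rw [Real.sqrt_mul hd0.le, Real.sqrt_eq_rpow x]
    have hs3 : Real.sqrt (x * Real.log (1 / γ L) +
        Real.log (1 + U ^ 2 * (1 - γ L ^ L) / (lam * d * (1 - γ L))))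
        ≤ Real.sqrt Kin * x ^ ((3:ℝ)/10) := by
      have h7 : Real.sqrt (Kin * x ^ ((3:ℝ)/5)) = Real.sqrt Kin * x ^ ((3:ℝ)/10) := by
        rw [Real.sqrt_mul hKin0, Real.sqrt_eq_rpow (x ^ ((3:ℝ)/5)), ← Real.rpow_mul hx0.le]
        norm_num
      rw [← h7]
      exact Real.sqrt_le_sqrt hinner
    calc c1 * β L * Real.sqrt (d * x) * Real.sqrt (x * Real.log (1 / γ L) +
          Real.log (1 + U ^ 2 * (1 - γ L ^ L) / (lam * d * (1 - γ L))))
        ≤ c1 * (Kβ * Real.sqrt (Real.log x)) * Real.sqrt (d * x) *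
          (Real.sqrt Kin * x ^ ((3:ℝ)/10)) := by
          apply mul_le_mul
          · exact mul_le_mul_of_nonneg_right
              (mul_le_mul_of_nonneg_left hβle hc10) (Real.sqrt_nonneg _)
          · exact hs3
          · exact Real.sqrt_nonneg _
          · exact mul_nonneg (mul_nonneg hc10
              (mul_nonneg hKβ0 (Real.sqrt_nonneg _))) (Real.sqrt_nonneg _)
      _ = c1 * Kβ * (Real.sqrt d * Real.sqrt Kin) *
          (Real.sqrt (Real.log x) * (x ^ ((1:ℝ)/2) * x ^ ((3:ℝ)/10))) := by
          rw [hs2]; ring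
      _ = K1 * (Real.sqrt (Real.log x) * x ^ ((4:ℝ)/5)) := by
          rw [hK1def, ← Real.rpow_add hx0]; norm_num
      _ ≤ K1 * (Real.log x * x ^ ((4:ℝ)/5)) := by
          apply mul_le_mul_of_nonneg_left _ hK10
          apply mul_le_mul_of_nonneg_right _ (le_of_lt hx45)
          calc Real.sqrt (Real.log x) ≤ Real.sqrt (Real.log x * Real.log x) := by
                apply Real.sqrt_le_sqrt
                exact le_mul_of_one_le_right hlogx0 hlogx
            _ = Real.log x := Real.sqrt_mul_self hlogx0
      _ = K1 * (x ^ ((4:ℝ)/5) * Real.log x) := by ring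
  -- TERM 2
  have hterm2 : (8 * k ^ 2 * S * U ^ 3 * γ L ^ Dw L / (c * lam * (1 - γ L))) * x
      ≤ K2 * (x ^ ((4:ℝ)/5) * Real.log x) := by
    rw [hge]
    have h1 : (8 * k ^ 2 * S * U ^ 3 * γ L ^ Dw L / (c * lam * e)) * x
        = (8 * k ^ 2 * S * U ^ 3 / (c * lam * C)) * (γ L ^ Dw L * x * p) := by
      rw [hedef]; field_simp
    have h2 : γ L ^ Dw L * x * p ≤ (1/x) * x * p := by
      apply mul_le_mul_of_nonneg_right _ hp0.le
      exact mul_le_mul_of_nonneg_right hγD hx0.le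
    have h3 : (1/x) * x * p = p := by field_simp
    have h4 : p ≤ x ^ ((4:ℝ)/5) * Real.log x := by
      calc p = p * 1 := (mul_one p).symm
        _ ≤ x ^ ((4:ℝ)/5) * Real.log x := mul_le_mul hple hlogx zero_le_one hx45.le
    have hcoef : 0 ≤ 8 * k ^ 2 * S * U ^ 3 / (c * lam * C) := by positivity
    rw [h1, hK2def]
    calc 8 * k ^ 2 * S * U ^ 3 / (c * lam * C) * (γ L ^ Dw L * x * p)
        ≤ 8 * k ^ 2 * S * U ^ 3 / (c * lam * C) * p := by
          apply mul_le_mul_of_nonneg_left _ hcoef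
          exact h2.trans h3.le
      _ ≤ 8 * k ^ 2 * S * U ^ 3 / (c * lam * C) * (x ^ ((4:ℝ)/5) * Real.log x) :=
          mul_le_mul_of_nonneg_left h4 hcoef
  -- TERM 3
  have hC32 : 0 < C ^ ((3:ℝ)/2) := Real.rpow_pos_of_pos hC _
  have hlam32 : 0 < lam ^ ((3:ℝ)/2) := Real.rpow_pos_of_pos hlam _
  have hterm3 : (8 * k ^ 2 * S * U ^ 4 * γ L ^ Dw L /
      (c * lam ^ ((3:ℝ)/2) * (1 - γ L) ^ ((3:ℝ)/2))) * x ≤ K3 * (x ^ ((4:ℝ)/5) * Real.log x) := by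
    rw [hge]
    have he32 : e ^ ((3:ℝ)/2) = C ^ ((3:ℝ)/2) / x ^ ((3:ℝ)/5) := by
      rw [hedef, Real.div_rpow hC.le hp0.le, hp32]
    have h1 : (8 * k ^ 2 * S * U ^ 4 * γ L ^ Dw L / (c * lam ^ ((3:ℝ)/2) * e ^ ((3:ℝ)/2))) * x
        = (8 * k ^ 2 * S * U ^ 4 / (c * lam ^ ((3:ℝ)/2) * C ^ ((3:ℝ)/2))) *
          (γ L ^ Dw L * x * x ^ ((3:ℝ)/5)) := by
      rw [he32]
      field_simp
    have h2 : γ L ^ Dw L * x * x ^ ((3:ℝ)/5) ≤ (1/x) * x * x ^ ((3:ℝ)/5) := by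
      apply mul_le_mul_of_nonneg_right _ hx350.le
      exact mul_le_mul_of_nonneg_right hγD hx0.le
    have h3 : (1/x) * x * x ^ ((3:ℝ)/5) = x ^ ((3:ℝ)/5) := by field_simp
    have h4 : x ^ ((3:ℝ)/5) ≤ x ^ ((4:ℝ)/5) * Real.log x := by
      calc x ^ ((3:ℝ)/5) = x ^ ((3:ℝ)/5) * 1 := (mul_one _).symm
        _ ≤ x ^ ((4:ℝ)/5) * Real.log x := mul_le_mul hx35le hlogx zero_le_one hx45.le
    have hcoef : 0 ≤ 8 * k ^ 2 * S * U ^ 4 / (c * lam ^ ((3:ℝ)/2) * C ^ ((3:ℝ)/2)) := by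
      positivity
    rw [h1, hK3def]
    calc 8 * k ^ 2 * S * U ^ 4 / (c * lam ^ ((3:ℝ)/2) * C ^ ((3:ℝ)/2)) *
          (γ L ^ Dw L * x * x ^ ((3:ℝ)/5))
        ≤ 8 * k ^ 2 * S * U ^ 4 / (c * lam ^ ((3:ℝ)/2) * C ^ ((3:ℝ)/2)) * x ^ ((3:ℝ)/5) := by
          apply mul_le_mul_of_nonneg_left _ hcoef
          exact h2.trans h3.le
      _ ≤ 8 * k ^ 2 * S * U ^ 4 / (c * lam ^ ((3:ℝ)/2) * C ^ ((3:ℝ)/2)) *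
          (x ^ ((4:ℝ)/5) * Real.log x) := mul_le_mul_of_nonneg_left h4 hcoef
  -- TERM 4
  have hsqC : 0 < Real.sqrt C := Real.sqrt_pos.2 hC
  have hsqCne : Real.sqrt C ≠ 0 := ne_of_gt hsqC
  have hsqlam : 0 < Real.sqrt lam := Real.sqrt_pos.2 hlam
  have hsqlamne : Real.sqrt lam ≠ 0 := ne_of_gt hsqlam
  have hreq : r = Real.log x * p / C := by rw [hrdef, hedef]; field_simp
  have hsqe : Real.sqrt (↑d / (1 - γ L)) = Real.sqrt d * (x ^ ((1:ℝ)/5) / Real.sqrt C) := by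
    rw [hge, hedef, Real.sqrt_div' (d:ℝ) (div_pos hC hp0).le,
      Real.sqrt_div' C hp0.le, ← hsqp, div_div_eq_mul_div, mul_div_assoc]
  have hterm4 : (4 * k ^ 2 * U * (Dw L : ℝ) / (c * Real.sqrt lam)) *
      Real.sqrt (↑d / (1 - γ L)) * B ≤ K4 * (x ^ ((4:ℝ)/5) * Real.log x) := by
    rw [hsqe]
    have hcoef : 0 ≤ 4 * k ^ 2 * U / (c * Real.sqrt lam) * (Real.sqrt d / Real.sqrt C) * B := by
      positivity
    have h1 : (4 * k ^ 2 * U * (Dw L : ℝ) / (c * Real.sqrt lam)) *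
        (Real.sqrt d * (x ^ ((1:ℝ)/5) / Real.sqrt C)) * B
        = (4 * k ^ 2 * U / (c * Real.sqrt lam) * (Real.sqrt d / Real.sqrt C) * B) *
          ((Dw L : ℝ) * x ^ ((1:ℝ)/5)) := by ring
    have h4 : p * x ^ ((1:ℝ)/5) = x ^ ((3:ℝ)/5) := by
      rw [hpdef, ← Real.rpow_add hx0]; norm_num
    have h2 : (Dw L : ℝ) * x ^ ((1:ℝ)/5) ≤ (2 / C) * Real.log x * x ^ ((4:ℝ)/5) := by
      have ha : (Dw L : ℝ) * x ^ ((1:ℝ)/5) ≤ (2 * (Real.log x * p / C)) * x ^ ((1:ℝ)/5) := by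
        apply mul_le_mul_of_nonneg_right _ (Real.rpow_nonneg hx0.le _)
        rw [← hreq]; linarith
      have hb : (2 * (Real.log x * p / C)) * x ^ ((1:ℝ)/5)
          = (2 / C) * Real.log x * (p * x ^ ((1:ℝ)/5)) := by ring
      have hcle : (2 / C) * Real.log x * x ^ ((3:ℝ)/5) ≤ (2 / C) * Real.log x * x ^ ((4:ℝ)/5) :=
        mul_le_mul_of_nonneg_left hx35le (mul_nonneg (by positivity) hlogx0)
      calc (Dw L : ℝ) * x ^ ((1:ℝ)/5) ≤ (2 * (Real.log x * p / C)) * x ^ ((1:ℝ)/5) := ha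
        _ = (2 / C) * Real.log x * (p * x ^ ((1:ℝ)/5)) := hb
        _ = (2 / C) * Real.log x * x ^ ((3:ℝ)/5) := by rw [h4]
        _ ≤ (2 / C) * Real.log x * x ^ ((4:ℝ)/5) := hcle
    rw [h1]
    calc (4 * k ^ 2 * U / (c * Real.sqrt lam) * (Real.sqrt d / Real.sqrt C) * B) *
          ((Dw L : ℝ) * x ^ ((1:ℝ)/5))
        ≤ (4 * k ^ 2 * U / (c * Real.sqrt lam) * (Real.sqrt d / Real.sqrt C) * B) *
          ((2 / C) * Real.log x * x ^ ((4:ℝ)/5)) := mul_le_mul_of_nonneg_left h2 hcoef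
      _ = K4 * (x ^ ((4:ℝ)/5) * Real.log x) := by
          rw [hK4def]
          field_simp
          ring
  -- TERM 5
  have hterm5 : (4 * k ^ 2 * U ^ 2 * (Dw L : ℝ) / (c * lam)) * (Real.sqrt d / (1 - γ L)) * B
      ≤ K5 * (x ^ ((4:ℝ)/5) * Real.log x) := by
    rw [hge]
    have hcoef : 0 ≤ 4 * k ^ 2 * U ^ 2 / (c * lam) * Real.sqrt d * B := by positivity
    have h1 : (4 * k ^ 2 * U ^ 2 * (Dw L : ℝ) / (c * lam)) * (Real.sqrt d / e) * B
        = (4 * k ^ 2 * U ^ 2 / (c * lam) * Real.sqrt d * B) * ((Dw L : ℝ) * (p / C)) := by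
      rw [hedef]; field_simp
    have h2 : (Dw L : ℝ) * (p / C) ≤ (2 / C^2) * Real.log x * x ^ ((4:ℝ)/5) := by
      have ha : (Dw L : ℝ) * (p / C) ≤ (2 * (Real.log x * p / C)) * (p / C) := by
        apply mul_le_mul_of_nonneg_right _ (by positivity)
        rw [← hreq]; linarith
      have hb : (2 * (Real.log x * p / C)) * (p / C) = (2 / C^2) * Real.log x * (p * p) := by
        field_simp
      calc (Dw L : ℝ) * (p / C) ≤ (2 * (Real.log x * p / C)) * (p / C) := ha
        _ = (2 / C^2) * Real.log x * (p * p) := hb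
        _ = (2 / C^2) * Real.log x * x ^ ((4:ℝ)/5) := by rw [hp2]
    rw [h1]
    calc (4 * k ^ 2 * U ^ 2 / (c * lam) * Real.sqrt d * B) * ((Dw L : ℝ) * (p / C))
        ≤ (4 * k ^ 2 * U ^ 2 / (c * lam) * Real.sqrt d * B) *
          ((2 / C^2) * Real.log x * x ^ ((4:ℝ)/5)) := mul_le_mul_of_nonneg_left h2 hcoef
      _ = K5 * (x ^ ((4:ℝ)/5) * Real.log x) := by
          rw [hK5def]
          field_simp
          ring
  -- nonnegativity of F L
  have hF0 : 0 ≤ F L := by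
    rw [hFL]
    have h1 : 0 ≤ c1 * β L * Real.sqrt (d * x) * Real.sqrt (x * Real.log (1 / γ L) +
        Real.log (1 + U ^ 2 * (1 - γ L ^ L) / (lam * d * (1 - γ L)))) :=
      mul_nonneg (mul_nonneg (mul_nonneg hc10 hβ0) (Real.sqrt_nonneg _)) (Real.sqrt_nonneg _)
    have h2 : 0 ≤ (8 * k ^ 2 * S * U ^ 3 * γ L ^ Dw L / (c * lam * (1 - γ L))) * x := by
      rw [hge]; positivity
    have h3 : 0 ≤ (8 * k ^ 2 * S * U ^ 4 * γ L ^ Dw L /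
        (c * lam ^ ((3:ℝ)/2) * (1 - γ L) ^ ((3:ℝ)/2))) * x := by
      rw [hge]
      have he32 : 0 < e ^ ((3:ℝ)/2) := Real.rpow_pos_of_pos he0 _
      positivity
    have h4 : 0 ≤ (4 * k ^ 2 * U * (Dw L:ℝ) / (c * Real.sqrt lam)) *
        Real.sqrt (↑d / (1 - γ L)) * B := by
      apply mul_nonneg _ hB.le
      apply mul_nonneg _ (Real.sqrt_nonneg _)
      apply div_nonneg _ (by positivity)
      exact mul_nonneg (by positivity) hD0
    have h5 : 0 ≤ (4 * k ^ 2 * U ^ 2 * (Dw L:ℝ) / (c * lam)) *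
        (Real.sqrt d / (1 - γ L)) * B := by
      rw [hge]
      apply mul_nonneg _ hB.le
      apply mul_nonneg _ (div_nonneg (Real.sqrt_nonneg _) he0.le)
      apply div_nonneg _ (by positivity)
      exact mul_nonneg (by positivity) hD0
    linarith
  -- conclude
  have hgabs : |x ^ ((4:ℝ)/5) * Real.log x| = x ^ ((4:ℝ)/5) * Real.log x :=
    abs_of_nonneg (mul_nonneg hx45.le hlogx0)
  rw [Real.norm_eq_abs, Real.norm_eq_abs, abs_of_nonneg hF0, hgabs, hFL]
  have hexpand : (K1 + K2 + K3 + K4 + K5) * (x ^ ((4:ℝ)/5) * Real.log x) =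
      K1 * (x ^ ((4:ℝ)/5) * Real.log x) + K2 * (x ^ ((4:ℝ)/5) * Real.log x) +
      K3 * (x ^ ((4:ℝ)/5) * Real.log x) + K4 * (x ^ ((4:ℝ)/5) * Real.log x) +
      K5 * (x ^ ((4:ℝ)/5) * Real.log x) := by ring
  rw [hexpand]
  exact add_le_add (add_le_add (add_le_add (add_le_add hterm1 hterm2) hterm3) hterm4) hterm5
end

section
/- Let d, L ≥ 1 be integers, λ > 0, U > 0, γ ∈ (0,1), and let x_1, …, x_L ∈ ℝ^d satisfy ‖x_s‖₂ ≤ U for all s. For 1 ≤ l ≤ L define V_l := Σ_{s=1}^{l} γ^{l−s} x_s x_sᵀ + λ I_d. Then Σ_{l=1}^{L} ‖x_l‖²_{V_l^{-1}} ≤ 2·max(1, U²/λ)·( dL·log(1/γ) + d·log(1 + U²(1−γ^L)/(λd(1−γ))) ). -/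
open Matrix Finset

variable {n : Type*} [Fintype n] [DecidableEq n]

lemma vecMulVec_mulVec (w v u : n → ℝ) : vecMulVec w v *ᵥ u = (v ⬝ᵥ u) • w := by
  ext i
  simp [vecMulVec_apply, mulVec, dotProduct, Finset.mul_sum, mul_comm, mul_left_comm]

lemma posSemidef_vecMulVec_self (v : n → ℝ) : (vecMulVec v v).PosSemidef := by
  refine .of_dotProduct_mulVec_nonneg ?_ ?_
  · ext i j
    simp [conjTranspose_apply, vecMulVec_apply, mul_comm]
  · intro y
    rw [_root_.vecMulVec_mulVec]
    simp only [star_trivial, dotProduct_smul]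
    have : v ⬝ᵥ y = y ⬝ᵥ v := dotProduct_comm _ _
    rw [smul_eq_mul, this]
    exact mul_self_nonneg _

lemma posSemidef_smul {M : Matrix n n ℝ} (hM : M.PosSemidef) {c : ℝ} (hc : 0 ≤ c) :
    (c • M).PosSemidef := by
  refine .of_dotProduct_mulVec_nonneg ?_ ?_
  · unfold Matrix.IsHermitian at *
    ext i j
    simp only [conjTranspose_apply, Matrix.smul_apply, star_trivial, smul_eq_mul]
    have := congrFun (congrFun hM.1 i) j
    simp only [conjTranspose_apply, star_trivial] at this
    rw [this]
  · intro y
    rw [smul_mulVec, dotProduct_smul]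
    exact smul_nonneg hc (hM.dotProduct_mulVec_nonneg y)

set_option linter.unusedSectionVars false

lemma det_conj_unitary (U : Matrix.unitaryGroup n ℝ) (D : Matrix n n ℝ) :
    det ((U : Matrix n n ℝ) * D * (star U : Matrix n n ℝ)) = det D := by
  rw [det_mul, det_mul, mul_comm ((U : Matrix n n ℝ)).det, mul_assoc, ← det_mul,
    (Matrix.mem_unitaryGroup_iff).mp U.2, det_one, mul_one]

lemma det_le_det_add_smul_one {B : Matrix n n ℝ} (hB : B.PosSemidef) {c : ℝ} (hc : 0 ≤ c) :
    det B ≤ det (B + c • 1) := by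
  have hH := hB.1
  have hspec := hH.spectral_theorem
  simp only [Unitary.conjStarAlgAut_apply] at hspec
  set U := hH.eigenvectorUnitary with hU
  have key : B + c • 1 = (U : Matrix n n ℝ) * (diagonal (fun i => hH.eigenvalues i + c))
      * (star U : Matrix n n ℝ) := by
    have h1 : (c • 1 : Matrix n n ℝ) =
        (U : Matrix n n ℝ) * (c • 1) * (star U : Matrix n n ℝ) := by
      rw [Matrix.mul_smul, Matrix.smul_mul, mul_one,
        (Matrix.mem_unitaryGroup_iff).mp U.2]
    calc B + c • 1 = (U : Matrix n n ℝ) * (diagonal (RCLike.ofReal ∘ hH.eigenvalues))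
          * (star U : Matrix n n ℝ) + (U : Matrix n n ℝ) * (c • 1)
          * (star U : Matrix n n ℝ) := by rw [← hspec, ← h1]
      _ = _ := by
        rw [← Matrix.add_mul, ← Matrix.mul_add]
        congr 2
        rw [smul_one_eq_diagonal, diagonal_add]
        rfl
  rw [key, det_conj_unitary]
  conv_lhs => rw [hspec, det_conj_unitary]
  rw [det_diagonal, det_diagonal]
  refine Finset.prod_le_prod (fun i _ => ?_) (fun i _ => ?_)
  · simpa using hB.eigenvalues_nonneg i
  · simp only [Function.comp_apply, RCLike.ofReal_real_eq_id, id_eq]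
    linarith

lemma trace_eq_sum_eigenvalues {B : Matrix n n ℝ} (hB : B.IsHermitian) :
    trace B = ∑ i, hB.eigenvalues i := by
  conv_lhs => rw [hB.spectral_theorem, Unitary.conjStarAlgAut_apply]
  rw [trace_mul_comm, ← mul_assoc, (Matrix.mem_unitaryGroup_iff').mp hB.eigenvectorUnitary.2,
    one_mul, trace_diagonal]
  simp

lemma det_le_trace_div_card_pow {B : Matrix n n ℝ} (hB : B.PosSemidef) [Nonempty n] :
    det B ≤ (trace B / Fintype.card n) ^ (Fintype.card n) := by
  classical
  set d := Fintype.card n with hd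
  have hd0 : 0 < (d : ℝ) := by positivity
  have hev : ∀ i, 0 ≤ hB.1.eigenvalues i := hB.eigenvalues_nonneg
  have hgm := Real.geom_mean_le_arith_mean_weighted Finset.univ (fun _ => 1 / d)
      (fun i => hB.1.eigenvalues i) (fun i _ => by positivity)
      (by rw [Finset.sum_const, Finset.card_univ, ← hd, nsmul_eq_mul]; field_simp) (fun i _ => hev i)
  have hdet : det B = ∏ i, hB.1.eigenvalues i := by
    rw [hB.1.det_eq_prod_eigenvalues]; norm_num
  have htr : trace B = ∑ i, hB.1.eigenvalues i := trace_eq_sum_eigenvalues hB.1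
  have hpow : det B = (∏ i, hB.1.eigenvalues i ^ (1 / (d:ℝ))) ^ d := by
    rw [hdet, ← Finset.prod_pow]
    refine Finset.prod_congr rfl fun i _ => ?_
    rw [← Real.rpow_natCast (hB.1.eigenvalues i ^ (1 / (d:ℝ))) d,
      ← Real.rpow_mul (hev i)]
    field_simp
    simp
  rw [hpow]
  have hL : 0 ≤ ∏ i, hB.1.eigenvalues i ^ (1 / (d:ℝ)) :=
    Finset.prod_nonneg fun i _ => Real.rpow_nonneg (hev i) _
  refine pow_le_pow_left₀ hL ?_ d
  calc ∏ i, hB.1.eigenvalues i ^ (1 / (d:ℝ)) ≤ ∑ i, (1 / (d:ℝ)) * hB.1.eigenvalues i := hgm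
    _ = trace B / d := by rw [htr, ← Finset.mul_sum]; ring

lemma sherman_morrison_quad {A : Matrix n n ℝ} (hA : A.PosDef) (v : n → ℝ) :
    v ⬝ᵥ (A + vecMulVec v v)⁻¹ *ᵥ v
      = (v ⬝ᵥ A⁻¹ *ᵥ v) / (1 + v ⬝ᵥ A⁻¹ *ᵥ v) := by
  set u := v ⬝ᵥ A⁻¹ *ᵥ v with hu
  have hu0 : 0 ≤ u := by
    have := hA.inv.posSemidef.dotProduct_mulVec_nonneg v
    simpa using this
  have hM : (A + vecMulVec v v).PosDef := hA.add_posSemidef (posSemidef_vecMulVec_self v)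
  set M := A + vecMulVec v v with hMdef
  set w := M⁻¹ *ᵥ v with hw
  have hMw : M *ᵥ w = v := by
    rw [hw, mulVec_mulVec, Matrix.mul_nonsing_inv _ (isUnit_iff_ne_zero.mpr hM.det_pos.ne'),
      one_mulVec]
  have hAw : A *ᵥ w = (1 - v ⬝ᵥ w) • v := by
    have : A *ᵥ w + vecMulVec v v *ᵥ w = v := by rw [← add_mulVec, ← hMdef, hMw]
    rw [_root_.vecMulVec_mulVec] at this
    have h2 : A *ᵥ w = v - (v ⬝ᵥ w) • v := eq_sub_of_add_eq this
    rw [h2, sub_smul, one_smul]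
  have hwA : w = (1 - v ⬝ᵥ w) • (A⁻¹ *ᵥ v) := by
    have := congrArg (fun z => A⁻¹ *ᵥ z) hAw
    simpa [mulVec_mulVec, Matrix.nonsing_inv_mul _ (isUnit_iff_ne_zero.mpr hA.det_pos.ne'),
      mulVec_smul] using this
  have key : v ⬝ᵥ w = (1 - v ⬝ᵥ w) * u := by
    conv_lhs => rw [hwA]
    rw [dotProduct_smul, smul_eq_mul, hu]
  have h1u : (1 + u) ≠ 0 := by positivity
  field_simp
  linarith [key]

lemma det_add_vecMulVec {A : Matrix n n ℝ} (hA : A.PosDef) (v : n → ℝ) :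
    det (A + vecMulVec v v) = det A * (1 + v ⬝ᵥ A⁻¹ *ᵥ v) := by
  rw [vecMulVec_eq Unit, Matrix.det_add_replicateCol_mul_replicateRow (isUnit_iff_ne_zero.mpr hA.det_pos.ne')]
  congr 1
  rw [det_unique]
  have hsym : ∀ i j, A⁻¹ i j = A⁻¹ j i := by
    intro i j
    have := congrFun (congrFun hA.inv.1 j) i
    simpa [conjTranspose_apply] using this
  simp only [Matrix.mul_apply, Pi.add_apply, Matrix.one_apply_eq, Matrix.replicateRow_apply,
    Matrix.replicateCol_apply, mulVec, dotProduct, Finset.mul_sum, Finset.sum_mul]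
  simp [Matrix.add_apply, Matrix.one_apply_eq, Matrix.mul_apply, Matrix.replicateRow_apply,
    Matrix.replicateCol_apply, Finset.sum_mul, mul_assoc]
  rw [Finset.sum_comm]

lemma div_le_log_one_add {u : ℝ} (hu : 0 ≤ u) : u / (1 + u) ≤ Real.log (1 + u) := by
  have h1 : (0:ℝ) < 1 + u := by linarith
  have h2 := Real.log_le_sub_one_of_pos (show (0:ℝ) < 1/(1+u) by positivity)
  rw [one_div, Real.log_inv] at h2
  have : 1 / (1+u) - 1 = -(u/(1+u)) := by field_simp; ring
  rw [one_div] at this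
  linarith [this ▸ h2]

/-- **Lemma 2**: the discounted elliptical-potential inequality. -/
theorem discounted_elliptical_potential
    (d L : ℕ) (hd : 1 ≤ d) (hL : 1 ≤ L)
    (lam U γ : ℝ) (hlam : 0 < lam) (hU : 0 < U) (hγ0 : 0 < γ) (hγ1 : γ < 1)
    (x : ℕ → EuclideanSpace ℝ (Fin d))
    (hx : ∀ s ∈ Finset.Icc 1 L, ‖x s‖ ≤ U)
    (V : ℕ → Matrix (Fin d) (Fin d) ℝ)
    (hV : ∀ l, V l = ∑ s ∈ Finset.Icc 1 l, γ ^ (l - s) • vecMulVec (x s) (x s) + lam • 1) :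
    ∑ l ∈ Finset.Icc 1 L, x l ⬝ᵥ ((V l)⁻¹ *ᵥ x l) ≤
      2 * max 1 (U ^ 2 / lam) *
        (d * L * Real.log (1 / γ) +
          d * Real.log (1 + U ^ 2 * (1 - γ ^ L) / (lam * d * (1 - γ)))) := by
  classical
  have hdR : (0:ℝ) < d := by exact_mod_cast hd
  haveI : Nonempty (Fin d) := ⟨⟨0, hd⟩⟩
  -- positivity of V l
  have hVpos : ∀ l, (V l).PosDef := by
    intro l
    rw [hV l]
    refine Matrix.PosDef.posSemidef_add ?_ ?_
    · refine Finset.sum_induction _ _ (fun a b ha hb => ha.add hb) Matrix.PosSemidef.zero ?_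
      intro s _
      exact posSemidef_smul (posSemidef_vecMulVec_self _) (by positivity)
    · rw [smul_one_eq_diagonal]
      exact Matrix.PosDef.diagonal fun _ => hlam
  -- recursion
  have hrec : ∀ l, 1 ≤ l →
      V l = (γ • V (l-1) + (lam*(1-γ)) • 1) + vecMulVec (x l) (x l) := by
    intro l hl
    obtain ⟨m, rfl⟩ : ∃ m, l = m + 1 := ⟨l - 1, (Nat.succ_pred_eq_of_pos hl).symm⟩
    rw [hV (m+1), Nat.add_sub_cancel, hV m]
    rw [Finset.sum_Icc_succ_top (Nat.one_le_iff_ne_zero.mpr (Nat.succ_ne_zero m))]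
    rw [smul_add, Finset.smul_sum]
    have hsum : ∀ s ∈ Finset.Icc 1 m,
        γ • (γ ^ (m - s) • vecMulVec (x s) (x s)) = γ ^ (m + 1 - s) • vecMulVec (x s) (x s) := by
      intro s hs
      rw [smul_smul]
      congr 1
      rw [← pow_succ']
      congr 1
      have := Finset.mem_Icc.mp hs
      omega
    rw [Finset.sum_congr rfl hsum]
    have hscal : γ • (lam • (1 : Matrix (Fin d) (Fin d) ℝ)) + (lam*(1-γ)) • 1
        = lam • 1 := by
      rw [smul_smul, ← add_smul]
      ring_nf
    simp only [Nat.sub_self, pow_zero, one_smul]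
    conv_lhs => rw [← hscal]
    abel
  set f : ℕ → ℝ := fun l => Real.log (det (V l)) with hf
  have hkey : ∀ l ∈ Finset.Icc 1 L,
      x l ⬝ᵥ ((V l)⁻¹ *ᵥ x l) ≤ f l - f (l-1) + d * Real.log (1/γ) := by
    intro l hl
    obtain ⟨hl1, hlL⟩ := Finset.mem_Icc.mp hl
    set A := γ • V (l-1) + (lam*(1-γ)) • 1 with hA
    have hApos : A.PosDef := by
      refine Matrix.PosDef.posSemidef_add (posSemidef_smul (hVpos (l-1)).posSemidef hγ0.le) ?_
      rw [smul_one_eq_diagonal]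
      exact Matrix.PosDef.diagonal fun _ => by nlinarith
    have hVeq : V l = A + vecMulVec (x l) (x l) := hrec l hl1
    set u := (x l : Fin d → ℝ) ⬝ᵥ A⁻¹ *ᵥ x l with hu
    have hu0 : 0 ≤ u := by simpa using hApos.inv.posSemidef.dotProduct_mulVec_nonneg (x l)
    have h1 : x l ⬝ᵥ ((V l)⁻¹ *ᵥ x l) = u / (1 + u) := by
      rw [hVeq]; exact sherman_morrison_quad hApos (x l)
    have hdetV : det (V l) = det A * (1 + u) := by
      rw [hVeq]; exact det_add_vecMulVec hApos (x l)
    have h2 : Real.log (1 + u) = f l - Real.log (det A) := by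
      show Real.log (1+u) = Real.log (det (V l)) - Real.log (det A)
      rw [hdetV, Real.log_mul hApos.det_pos.ne' (by positivity)]
      ring
    have h3 : (d:ℝ) * Real.log γ + f (l-1) ≤ Real.log (det A) := by
      have hAe : A = γ • (V (l-1) + (lam*(1-γ)/γ) • 1) := by
        rw [hA, smul_add, smul_smul]
        congr 2
        field_simp
      have hdet : det A = γ^d * det (V (l-1) + (lam*(1-γ)/γ) • 1) := by
        rw [hAe, det_smul]
        congr 2
        simp
      have hγ1' : (0:ℝ) < 1 - γ := by linarith
      have hc : (0:ℝ) ≤ lam*(1-γ)/γ := by positivity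
      have hge : det (V (l-1)) ≤ det (V (l-1) + (lam*(1-γ)/γ) • 1) :=
        det_le_det_add_smul_one (hVpos (l-1)).posSemidef hc
      have hpos2 : (0:ℝ) < det (V (l-1) + (lam*(1-γ)/γ) • 1) :=
        lt_of_lt_of_le (hVpos (l-1)).det_pos hge
      rw [hdet, Real.log_mul (by positivity) hpos2.ne', Real.log_pow]
      have : f (l-1) ≤ Real.log (det (V (l-1) + (lam*(1-γ)/γ) • 1)) :=
        Real.log_le_log (hVpos (l-1)).det_pos hge
      linarith
    have hloginv : Real.log (1/γ) = - Real.log γ := by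
      rw [one_div, Real.log_inv]
    calc x l ⬝ᵥ ((V l)⁻¹ *ᵥ x l) = u / (1 + u) := h1
      _ ≤ Real.log (1 + u) := div_le_log_one_add hu0
      _ = f l - Real.log (det A) := h2
      _ ≤ f l - ((d:ℝ) * Real.log γ + f (l-1)) := by linarith
      _ = f l - f (l-1) + d * Real.log (1/γ) := by rw [hloginv]; ring
  -- telescoping sum
  have hsum1 : ∑ l ∈ Finset.Icc 1 L, x l ⬝ᵥ ((V l)⁻¹ *ᵥ x l)
      ≤ f L - f 0 + L * ((d:ℝ) * Real.log (1/γ)) := by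
    refine le_trans (Finset.sum_le_sum hkey) (le_of_eq ?_)
    rw [Finset.sum_add_distrib, Finset.sum_const, Nat.card_Icc, Nat.add_sub_cancel,
      nsmul_eq_mul]
    congr 1
    have h1 : ∑ l ∈ Finset.Icc 1 L, (f l - f (l-1)) = ∑ i ∈ Finset.range L, (f (i+1) - f i) := by
      rw [← Finset.Ico_add_one_right_eq_Icc, Finset.sum_Ico_eq_sum_range]
      refine Finset.sum_congr rfl fun i _ => ?_
      congr 2 <;> omega
    rw [h1, Finset.sum_range_sub f]
  -- value of f 0
  have hV0 : V 0 = lam • 1 := by rw [hV 0]; simp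
  have hf0 : f 0 = (d:ℝ) * Real.log lam := by
    show Real.log (det (V 0)) = _
    rw [hV0, smul_one_eq_diagonal, det_diagonal, Finset.prod_const, Finset.card_univ,
      Fintype.card_fin, Real.log_pow]
  -- trace bound
  have hdot : ∀ s ∈ Finset.Icc 1 L, (x s : Fin d → ℝ) ⬝ᵥ (x s : Fin d → ℝ) ≤ U^2 := by
    intro s hs
    have h1 : (x s : Fin d → ℝ) ⬝ᵥ (x s : Fin d → ℝ) = ‖x s‖^2 := by
      rw [EuclideanSpace.norm_eq, Real.sq_sqrt (by positivity)]
      simp [dotProduct, sq]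
    rw [h1]
    have := hx s hs
    nlinarith [norm_nonneg (x s)]
  have htrace : trace (V L) ≤ lam * d + U^2 * (1 - γ^L) / (1-γ) := by
    rw [hV L]
    rw [trace_add, trace_sum]
    have h1 : trace (lam • (1 : Matrix (Fin d) (Fin d) ℝ)) = lam * d := by
      rw [trace_smul, trace_one]
      simp [Fintype.card_fin]
    have h2 : ∀ s ∈ Finset.Icc 1 L, trace (γ ^ (L - s) • vecMulVec (x s) (x s))
        = γ ^ (L - s) * ((x s : Fin d → ℝ) ⬝ᵥ (x s : Fin d → ℝ)) := by
      intro s _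
      rw [trace_smul, smul_eq_mul]
      congr 1
    rw [Finset.sum_congr rfl h2, h1]
    have h3 : ∑ s ∈ Finset.Icc 1 L, γ ^ (L - s) * ((x s : Fin d → ℝ) ⬝ᵥ (x s : Fin d → ℝ))
        ≤ ∑ s ∈ Finset.Icc 1 L, γ ^ (L - s) * U^2 := by
      refine Finset.sum_le_sum fun s hs => ?_
      exact mul_le_mul_of_nonneg_left (hdot s hs) (by positivity)
    have h4 : ∑ s ∈ Finset.Icc 1 L, γ ^ (L - s) = (1 - γ^L) / (1-γ) := by
      have hre : ∑ s ∈ Finset.Icc 1 L, γ ^ (L - s) = ∑ i ∈ Finset.range L, γ ^ (L - 1 - i) := by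
        rw [← Finset.Ico_add_one_right_eq_Icc, Finset.sum_Ico_eq_sum_range]
        refine Finset.sum_congr rfl fun i _ => ?_
        congr 1
        omega
      rw [hre, Finset.sum_range_reflect (fun i => γ ^ i) L]
      rw [geom_sum_eq (by linarith : γ ≠ 1)]
      rw [div_eq_div_iff (by linarith : γ - 1 ≠ 0) (by linarith : (1:ℝ) - γ ≠ 0)]
      ring
    calc ∑ s ∈ Finset.Icc 1 L, γ ^ (L - s) * ((x s : Fin d → ℝ) ⬝ᵥ (x s : Fin d → ℝ)) + lam * d
        ≤ (∑ s ∈ Finset.Icc 1 L, γ ^ (L - s)) * U^2 + lam * d := by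
          rw [Finset.sum_mul]
          exact add_le_add_left h3 _
      _ = lam * d + U^2 * (1 - γ^L) / (1-γ) := by rw [h4]; ring
  -- bound on f L
  have hTpos : 0 < trace (V L) := by
    rw [trace_eq_sum_eigenvalues (hVpos L).1]
    exact Finset.sum_pos (fun i _ => (hVpos L).eigenvalues_pos i) Finset.univ_nonempty
  have hfL : f L ≤ (d:ℝ) * Real.log (trace (V L) / d) := by
    show Real.log (det (V L)) ≤ _
    have h1 := det_le_trace_div_card_pow (hVpos L).posSemidef
    rw [Fintype.card_fin] at h1
    calc Real.log (det (V L)) ≤ Real.log ((trace (V L)/d)^d) :=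
          Real.log_le_log (hVpos L).det_pos h1
      _ = (d:ℝ) * Real.log (trace (V L)/d) := by rw [Real.log_pow]
  set E := U^2 * (1 - γ^L) / (lam * d * (1-γ)) with hE
  have hγ1' : (0:ℝ) < 1 - γ := by linarith
  have hγL : γ^L ≤ 1 := pow_le_one₀ hγ0.le hγ1.le
  have hE0 : 0 ≤ E := by
    rw [hE]
    apply div_nonneg
    · nlinarith
    · positivity
  have hstep : f L - f 0 ≤ (d:ℝ) * Real.log (1 + E) := by
    rw [hf0]
    have hd2 : trace (V L)/((d:ℝ)*lam) = (trace (V L)/d)/lam := by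
      rw [div_div]
    have h2 : Real.log (trace (V L)/d) - Real.log lam
        = Real.log (trace (V L)/((d:ℝ)*lam)) := by
      rw [hd2, Real.log_div (by positivity) hlam.ne']
    have hle : trace (V L)/((d:ℝ)*lam) ≤ 1 + E := by
      rw [div_le_iff₀ (by positivity)]
      have hEd : E * ((d:ℝ)*lam) = U^2*(1-γ^L)/(1-γ) := by
        rw [hE]
        field_simp
      nlinarith [htrace]
    have h3 : Real.log (trace (V L)/((d:ℝ)*lam)) ≤ Real.log (1 + E) :=
      Real.log_le_log (by positivity) hle
    nlinarith [hfL]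
  have hloginv0 : 0 ≤ Real.log (1/γ) := Real.log_nonneg (one_le_one_div hγ0 hγ1.le)
  have hlog1E0 : 0 ≤ Real.log (1+E) := Real.log_nonneg (by linarith)
  have hbr : 0 ≤ (d:ℝ)*L*Real.log (1/γ) + d*Real.log (1+E) := by
    have h1 : 0 ≤ (d:ℝ)*L*Real.log (1/γ) := by positivity
    have h2 : 0 ≤ (d:ℝ)*Real.log (1+E) := by positivity
    linarith
  have hmul : 1 ≤ 2 * max 1 (U^2/lam) := by
    have : (1:ℝ) ≤ max 1 (U^2/lam) := le_max_left _ _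
    linarith
  calc ∑ l ∈ Finset.Icc 1 L, x l ⬝ᵥ ((V l)⁻¹ *ᵥ x l)
      ≤ f L - f 0 + L * ((d:ℝ) * Real.log (1/γ)) := hsum1
    _ ≤ (d:ℝ)*L*Real.log (1/γ) + d*Real.log (1+E) := by linarith
    _ ≤ 2 * max 1 (U^2/lam) * ((d:ℝ)*L*Real.log (1/γ) + d*Real.log (1+E)) :=
        le_mul_of_one_le_left hbr hmul
end
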